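/- arXiv:2407.02789 — 4 statements merged into one kernel-verified Lean document; each statement's English description precedes it below -/
import Mathlib

section
/- Let f be an integrable function on 𝕋 and let z ∈ ℂ with |z| < 1. Then the Poisson integral (Pf)(z) = (1/2π)∫₀^{2π} ((1 − |z|²)/|e^{it} − z|²) f(e^{it}) dt satisfies (Pf)(z) = f̂(0) + Σ_{n=1}^{∞} f̂(−n) z̄ⁿ + Σ_{n=1}^{∞} f̂(n) zⁿ, where both series converge absolutely. -/
open Complex MeasureTheory intervalIntegral

/-- The `l`-th Fourier coefficient of a function on the unit circle `𝕋`. -/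
noncomputable def fourierCoeffT (g : ℂ → ℂ) (l : ℤ) : ℂ :=
  (1 / (2 * Real.pi)) •
    ∫ θ in (0:ℝ)..(2 * Real.pi), g (Complex.exp (Complex.I * θ)) * Complex.exp (-Complex.I * l * θ)

/-!
On the unit circle the Poisson kernel expands as
`P(z, e^{it}) = ∑_{n ≥ 0} (z e^{-it})ⁿ + ∑_{n ≥ 1} (z̄ e^{it})ⁿ`, a series whose `n`-th term is
bounded by `2 |z|ⁿ` uniformly in `t`. Hence it may be integrated termwise against `f`, and the
`n`-th terms contribute `f̂(n) zⁿ` and `f̂(-n) z̄ⁿ`. The coefficient series converge absolutely since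
`|f̂(k)| ≤ ‖f‖₁ / 2π` for every `k`.
-/

open ComplexConjugate
open scoped Real

theorem poissonKernel_zero_of_norm_eq_one (z : ℂ) {w : ℂ} (hw : ‖w‖ = 1) :
    poissonKernel 0 z w = (1 - ‖z‖ ^ 2) / ‖w - z‖ ^ 2 := by
  simp [poissonKernel, hw]

theorem poissonKernel_zero_eq_inv_add {z w : ℂ} (hz : ‖z‖ < 1) (hw : ‖w‖ = 1) :
    (poissonKernel 0 z w : ℂ) = (1 - z * conj w)⁻¹ + conj z * w * (1 - conj z * w)⁻¹ := by
  have hww : w * conj w = 1 := by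
    rw [mul_conj, normSq_eq_norm_sq, hw]; norm_num
  have hzz : z * conj z = (‖z‖ ^ 2 : ℝ) := by rw [mul_conj, normSq_eq_norm_sq]
  have hu : 1 - z * conj w ≠ 0 := sub_ne_zero.2 (ne_of_apply_ne norm (by simpa [hw] using hz.ne'))
  have hv : 1 - conj z * w ≠ 0 := sub_ne_zero.2 (ne_of_apply_ne norm (by simpa [hw] using hz.ne'))
  have hnorm : ((‖w - z‖ ^ 2 : ℝ) : ℂ) = (1 - z * conj w) * (1 - conj z * w) := by
    push_cast
    rw [← mul_conj', map_sub]
    linear_combination (1 - z * conj z) * hww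
  rw [poissonKernel_zero_of_norm_eq_one z hw, ofReal_div, hnorm, ofReal_sub, ofReal_one, ← hzz]
  field_simp
  linear_combination (conj z * z) * hww

noncomputable def poissonTerm (z : ℂ) (n : ℕ) (w : ℂ) : ℂ :=
  (z * conj w) ^ n + (conj z * w) ^ (n + 1)

theorem hasSum_poissonTerm {z w : ℂ} (hz : ‖z‖ < 1) (hw : ‖w‖ = 1) :
    HasSum (fun n => poissonTerm z n w) (poissonKernel 0 z w : ℂ) := by
  have h₁ : ‖z * conj w‖ < 1 := by simpa [hw] using hz
  have h₂ : ‖conj z * w‖ < 1 := by simpa [hw] using hz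
  rw [poissonKernel_zero_eq_inv_add hz hw]
  refine (hasSum_geometric_of_norm_lt_one h₁).add ?_
  simpa only [← pow_succ'] using (hasSum_geometric_of_norm_lt_one h₂).mul_left (conj z * w)

theorem norm_poissonTerm_le {z w : ℂ} (hz : ‖z‖ ≤ 1) (hw : ‖w‖ = 1) (n : ℕ) :
    ‖poissonTerm z n w‖ ≤ 2 * ‖z‖ ^ n := by
  have hle : ‖z‖ ^ (n + 1) ≤ ‖z‖ ^ n := pow_le_pow_of_le_one (norm_nonneg z) hz n.le_succ
  calc ‖poissonTerm z n w‖ ≤ ‖z‖ ^ n + ‖z‖ ^ (n + 1) :=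
        (norm_add_le _ _).trans_eq (by simp [hw])
    _ ≤ 2 * ‖z‖ ^ n := by linarith

theorem hasSum_intervalIntegral_mul {g : ℝ → ℂ} {a b : ℝ} {μ : Measure ℝ}
    (hg : IntervalIntegrable g μ a b) {φ : ℕ → ℝ → ℂ} {ψ : ℝ → ℂ} {B : ℕ → ℝ}
    (hφ : ∀ n, Continuous (φ n)) (hB : ∀ n t, ‖φ n t‖ ≤ B n) (hBs : Summable B)
    (hψ : ∀ t, HasSum (fun n => φ n t) (ψ t)) :
    HasSum (fun n => ∫ t in a..b, φ n t * g t ∂μ) (∫ t in a..b, ψ t * g t ∂μ) := by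
  refine hasSum_integral_of_dominated_convergence (fun n t => B n * ‖g t‖)
    (fun n => (hφ n).aestronglyMeasurable.mul hg.def'.aestronglyMeasurable)
    (fun n => .of_forall fun t _ => ?_) (.of_forall fun t _ => hBs.mul_right _) ?_
    (.of_forall fun t _ => (hψ t).mul_right (g t))
  · rw [norm_mul]
    exact mul_le_mul_of_nonneg_right (hB n t) (norm_nonneg _)
  · simpa only [tsum_mul_right] using hg.norm.const_mul (∑' n, B n)

theorem norm_fourierCoeffT_le (f : ℂ → ℂ) (l : ℤ) :
    ‖fourierCoeffT f l‖ ≤ 1 / (2 * π) * ∫ θ in 0..2 * π, ‖f (exp (I * θ))‖ := by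
  rw [fourierCoeffT, norm_smul, Real.norm_of_nonneg (by positivity)]
  gcongr
  refine (intervalIntegral.norm_integral_le_integral_norm (by positivity)).trans_eq
    (integral_congr fun θ _ => ?_)
  simp [norm_exp]

theorem summable_norm_fourierCoeffT_mul_pow (f : ℂ → ℂ) (k : ℕ → ℤ) {w : ℂ} (hw : ‖w‖ < 1) :
    Summable fun n : ℕ => ‖fourierCoeffT f (k n) * w ^ n‖ := by
  refine .of_nonneg_of_le (fun n => norm_nonneg _) (fun n => ?_)
    ((summable_geometric_of_lt_one (norm_nonneg w) hw).mul_left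
      (1 / (2 * π) * ∫ θ in 0..2 * π, ‖f (exp (I * θ))‖))
  rw [norm_mul, norm_pow]
  exact mul_le_mul_of_nonneg_right (norm_fourierCoeffT_le f (k n)) (by positivity)

theorem smul_integral_mul_eq_fourierCoeffT (f : ℂ → ℂ) (c : ℂ) (k : ℤ) :
    (1 / (2 * π)) • ∫ θ in 0..2 * π, c * exp (-I * k * θ) * f (exp (I * θ)) =
      fourierCoeffT f k * c := by
  simp_rw [mul_assoc c, intervalIntegral.integral_const_mul, mul_comm (cexp _)]
  rw [fourierCoeffT, smul_mul_assoc, mul_comm c]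

theorem mul_conj_exp_pow (c : ℂ) (n : ℕ) (t : ℝ) :
    (c * conj (exp (I * t))) ^ n = c ^ n * exp (-I * (n : ℤ) * t) := by
  rw [← exp_conj, mul_pow, ← exp_nat_mul]
  congr 2
  simp only [map_mul, conj_I, conj_ofReal, Int.cast_natCast]
  ring

theorem mul_exp_pow (c : ℂ) (n : ℕ) (t : ℝ) :
    (c * exp (I * t)) ^ n = c ^ n * exp (-I * (-n : ℤ) * t) := by
  rw [mul_pow, ← exp_nat_mul]
  push_cast
  ring_nf

theorem smul_integral_poissonTerm_mul {f : ℂ → ℂ}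
    (hf : IntervalIntegrable (fun θ : ℝ => f (exp (I * θ))) volume 0 (2 * π)) (z : ℂ) (n : ℕ) :
    (1 / (2 * π)) • ∫ t in 0..2 * π, poissonTerm z n (exp (I * t)) * f (exp (I * t)) =
      fourierCoeffT f n * z ^ n + fourierCoeffT f (-(n + 1)) * conj z ^ (n + 1) := by
  have hint : ∀ (c : ℂ) (k : ℤ), IntervalIntegrable
      (fun t : ℝ => c * exp (-I * k * t) * f (exp (I * t))) volume 0 (2 * π) :=
    fun c k => hf.continuousOn_mul (by fun_prop)
  simp_rw [poissonTerm, add_mul, mul_conj_exp_pow, mul_exp_pow]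
  rw [integral_add (hint _ _) (hint _ _), smul_add, smul_integral_mul_eq_fourierCoeffT,
    smul_integral_mul_eq_fourierCoeffT]
  push_cast
  ring_nf

/-- For an integrable function `f` on `𝕋` and `|z| < 1`, the Poisson integral of `f` at `z`
equals `f̂(0) + Σ_{n≥1} f̂(−n) z̄ⁿ + Σ_{n≥1} f̂(n) zⁿ`, both series converging absolutely. -/
theorem stmt_9 (f : ℂ → ℂ)
    (hf : IntervalIntegrable (fun θ : ℝ => f (Complex.exp (Complex.I * θ))) volume 0
      (2 * Real.pi))
    (z : ℂ) (hz : ‖z‖ < 1) :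
    Summable (fun n : ℕ => ‖fourierCoeffT f (-(n + 1)) * (starRingEnd ℂ z) ^ (n + 1)‖) ∧
    Summable (fun n : ℕ => ‖fourierCoeffT f (n + 1) * z ^ (n + 1)‖) ∧
    (1 / (2 * Real.pi)) •
        ∫ t in (0:ℝ)..(2 * Real.pi),
          (((1 - ‖z‖ ^ 2) / ‖Complex.exp (Complex.I * t) - z‖ ^ 2 : ℝ) : ℂ) *
            f (Complex.exp (Complex.I * t)) =
      fourierCoeffT f 0 + (∑' n : ℕ, fourierCoeffT f (-(n + 1)) * (starRingEnd ℂ z) ^ (n + 1))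
        + ∑' n : ℕ, fourierCoeffT f (n + 1) * z ^ (n + 1) := by
  have hz' : ‖conj z‖ < 1 := by rwa [norm_conj]
  have hneg : Summable fun n : ℕ => ‖fourierCoeffT f (-(n + 1)) * conj z ^ (n + 1)‖ := by
    simpa using (summable_nat_add_iff 1).2
      (summable_norm_fourierCoeffT_mul_pow f (fun n => -n) hz')
  have hpos : Summable fun n : ℕ => ‖fourierCoeffT f n * z ^ n‖ :=
    summable_norm_fourierCoeffT_mul_pow f _ hz
  refine ⟨hneg, by simpa using (summable_nat_add_iff 1).2 hpos, ?_⟩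
  have hterms := (hasSum_intervalIntegral_mul hf
    (fun n => by simp only [poissonTerm]; fun_prop)
    (fun n t => norm_poissonTerm_le hz.le (norm_exp_I_mul_ofReal t) n)
    ((summable_geometric_of_lt_one (norm_nonneg z) hz).mul_left 2)
    fun t => by
      simpa only [poissonKernel_zero_of_norm_eq_one z (norm_exp_I_mul_ofReal t)] using
        hasSum_poissonTerm hz (norm_exp_I_mul_ofReal t)).const_smul (1 / (2 * π))
  simp only [smul_integral_poissonTerm_mul hf] at hterms
  rw [hterms.unique (hpos.of_norm.hasSum.add hneg.of_norm.hasSum),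
    hpos.of_norm.tsum_eq_zero_add]
  push_cast
  ring
end

section
/- Let f : 𝕋 → ℂ be integrable with Σ_{l∈ℤ} |l| |f̂(l)| < ∞ and let η be an integrable function on 𝕋. Define F, G : {z ∈ ℂ : |z| < 1} → ℂ by F(z) = f̂(0) + Σ_{l=1}^{∞} f̂(l) z^l + Σ_{l=1}^{∞} f̂(−l) z̄^l and G(z) = η̂(0) + Σ_{l=1}^{∞} η̂(l) z^l + Σ_{l=1}^{∞} η̂(−l) z̄^l. Then F and G are smooth on the open unit disk and lim_{R↑1} ∫_{{z : |z| ≤ R}} ( (∂G/∂z)(∂F/∂z̄) − (∂F/∂z)(∂G/∂z̄) ) (−2i) dA(z) = 2πi Σ_{l∈ℤ} l f̂(l) η̂(−l), where the series on the right converges absolutely. -/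
open Complex MeasureTheory intervalIntegral Filter Metric

/-- The Wirtinger derivative `∂F/∂z = (∂F/∂x − i ∂F/∂y)/2`. -/
noncomputable def wirtingerDz (F : ℂ → ℂ) (z : ℂ) : ℂ :=
  (1 / 2) * (fderiv ℝ F z 1 - Complex.I * fderiv ℝ F z Complex.I)

/-- The Wirtinger derivative `∂F/∂z̄ = (∂F/∂x + i ∂F/∂y)/2`. -/
noncomputable def wirtingerDzbar (F : ℂ → ℂ) (z : ℂ) : ℂ :=
  (1 / 2) * (fderiv ℝ F z 1 + Complex.I * fderiv ℝ F z Complex.I)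

noncomputable def pS (c : ℕ → ℂ) (z : ℂ) : ℂ := ∑' n : ℕ, c n * z ^ (n + 1)
noncomputable def dS (c : ℕ → ℂ) (z : ℂ) : ℂ := ∑' n : ℕ, ((n : ℂ) + 1) * c n * z ^ n

lemma summable_aux {M r : ℝ} (hM : 0 ≤ M) (hr0 : 0 ≤ r) (hr : r < 1) :
    Summable (fun n : ℕ => ((n : ℝ) + 1) * M * r ^ n) := by
  have h1 : Summable (fun n : ℕ => (n : ℝ) * r ^ n) := by
    simpa using summable_pow_mul_geometric_of_norm_lt_one 1 (by
      rwa [Real.norm_eq_abs, _root_.abs_of_nonneg hr0])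
  have h2 : Summable (fun n : ℕ => r ^ n) :=
    summable_geometric_of_lt_one hr0 hr
  have := (h1.add h2).mul_left M
  refine this.congr fun n => by ring

lemma dS_term_bound {c : ℕ → ℂ} {M : ℝ} (hc : ∀ n, ‖c n‖ ≤ M) {z : ℂ} {r : ℝ}
    (hz : ‖z‖ ≤ r) (n : ℕ) : ‖((n : ℂ) + 1) * c n * z ^ n‖ ≤ ((n : ℝ) + 1) * M * r ^ n := by
  have h0 : (0:ℝ) ≤ r := le_trans (norm_nonneg z) hz
  have heq : ‖((n : ℂ) + 1) * c n * z ^ n‖ = ((n:ℝ)+1) * ‖c n‖ * ‖z‖ ^ n := by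
    rw [norm_mul, norm_mul, norm_pow]
    congr 2
    have : ((n : ℂ) + 1) = ((n + 1 : ℕ) : ℂ) := by push_cast; ring
    rw [this, Complex.norm_natCast]
    push_cast; ring
  rw [heq]
  have hn : (0:ℝ) ≤ (n:ℝ) + 1 := by positivity
  have hM : 0 ≤ M := le_trans (norm_nonneg _) (hc 0)
  gcongr
  all_goals first | exact hc n | exact hz | positivity

lemma summable_dS_norm {c : ℕ → ℂ} {M : ℝ} (hc : ∀ n, ‖c n‖ ≤ M) {z : ℂ} {r : ℝ}
    (hz : ‖z‖ ≤ r) (hr : r < 1) :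
    Summable (fun n : ℕ => ‖((n : ℂ) + 1) * c n * z ^ n‖) := by
  have h0 : (0:ℝ) ≤ r := le_trans (norm_nonneg z) hz
  have hM : 0 ≤ M := le_trans (norm_nonneg _) (hc 0)
  exact (summable_aux hM h0 hr).of_nonneg_of_le (fun n => norm_nonneg _)
    (fun n => dS_term_bound hc hz n)

lemma hasDerivAt_pS {c : ℕ → ℂ} {M : ℝ} (hc : ∀ n, ‖c n‖ ≤ M) {z : ℂ} (hz : ‖z‖ < 1) :
    HasDerivAt (pS c) (dS c z) z := by
  obtain ⟨r, hzr, hr1⟩ := exists_between hz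
  have hr0 : 0 < r := lt_of_le_of_lt (norm_nonneg z) hzr
  have hM : 0 ≤ M := le_trans (norm_nonneg _) (hc 0)
  apply hasDerivAt_tsum_of_isPreconnected (u := fun n : ℕ => ((n:ℝ)+1) * M * r ^ n)
    (summable_aux hM hr0.le hr1) (isOpen_ball (x := (0:ℂ)) (ε := r))
    ((convex_ball (0:ℂ) r).isPreconnected)
    (g' := fun n w => ((n : ℂ) + 1) * c n * w ^ n)
    (y₀ := 0)
  · intro n w hw
    have := ((hasDerivAt_pow (n+1) w).const_mul (c n))
    refine this.congr_deriv ?_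
    rw [Nat.add_sub_cancel]; push_cast; ring
  · intro n w hw
    exact dS_term_bound hc (le_of_lt (mem_ball_zero_iff.mp hw)) n
  · exact mem_ball_zero_iff.mpr (by simpa using hr0)
  · apply summable_zero.congr
    intro n; simp
  · exact mem_ball_zero_iff.mpr hzr

lemma continuousOn_dS {c : ℕ → ℂ} {M : ℝ} (hc : ∀ n, ‖c n‖ ≤ M) {r : ℝ} (hr0 : 0 ≤ r)
    (hr : r < 1) : ContinuousOn (dS c) (closedBall (0:ℂ) r) := by
  have hM : 0 ≤ M := le_trans (norm_nonneg _) (hc 0)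
  apply continuousOn_tsum (u := fun n : ℕ => ((n:ℝ)+1) * M * r ^ n)
  · intro n; fun_prop
  · exact summable_aux hM hr0 hr
  · intro n z hz
    exact dS_term_bound hc (mem_closedBall_zero_iff.mp hz) n

lemma contDiffOn_harm {c d : ℕ → ℂ} {Mc Md : ℝ} (hc : ∀ n, ‖c n‖ ≤ Mc) (hd : ∀ n, ‖d n‖ ≤ Md)
    (K : ℂ) : ContDiffOn ℝ (⊤ : ℕ∞) (fun z => K + pS c z + pS d (starRingEnd ℂ z)) (ball (0:ℂ) 1) := by
  have hP : AnalyticOnNhd ℝ (pS c) (ball (0:ℂ) 1) := by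
    apply AnalyticOnNhd.restrictScalars (𝕜' := ℂ)
    apply DifferentiableOn.analyticOnNhd _ isOpen_ball
    intro z hz
    exact ((hasDerivAt_pS hc (mem_ball_zero_iff.mp hz)).differentiableAt).differentiableWithinAt
  have hQ : AnalyticOnNhd ℝ (pS d) (ball (0:ℂ) 1) := by
    apply AnalyticOnNhd.restrictScalars (𝕜' := ℂ)
    apply DifferentiableOn.analyticOnNhd _ isOpen_ball
    intro z hz
    exact ((hasDerivAt_pS hd (mem_ball_zero_iff.mp hz)).differentiableAt).differentiableWithinAt
  have hconj : AnalyticOnNhd ℝ (fun z : ℂ => (starRingEnd ℂ) z) (ball (0:ℂ) 1) := by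
    intro z hz
    exact ((Complex.conjCLE.toContinuousLinearMap).analyticAt z).congr
      (Filter.Eventually.of_forall fun w => (Complex.conjCLE_apply w).symm)
  have hQc : AnalyticOnNhd ℝ (fun z => pS d (starRingEnd ℂ z)) (ball (0:ℂ) 1) := by
    apply hQ.comp hconj
    intro z hz
    simpa [mem_ball_zero_iff] using mem_ball_zero_iff.mp hz
  have : AnalyticOnNhd ℝ (fun z => K + pS c z + pS d (starRingEnd ℂ z)) (ball (0:ℂ) 1) :=
    ((analyticOnNhd_const.add hP).add hQc)
  exact this.contDiffOn isOpen_ball.uniqueDiffOn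

lemma wirtinger_pair {c d : ℕ → ℂ} {Mc Md : ℝ} (hc : ∀ n, ‖c n‖ ≤ Mc) (hd : ∀ n, ‖d n‖ ≤ Md)
    (K : ℂ) {z : ℂ} (hz : ‖z‖ < 1) :
    wirtingerDz (fun w => K + pS c w + pS d (starRingEnd ℂ w)) z = dS c z ∧
    wirtingerDzbar (fun w => K + pS c w + pS d (starRingEnd ℂ w)) z = dS d (starRingEnd ℂ z) := by
  have hP := (hasDerivAt_pS hc hz).hasFDerivAt.restrictScalars ℝ
  have hQ' : HasDerivAt (pS d) (dS d (starRingEnd ℂ z)) (starRingEnd ℂ z) :=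
    hasDerivAt_pS hd (by simpa using hz)
  have hconj : HasFDerivAt (fun w : ℂ => starRingEnd ℂ w)
      (Complex.conjCLE.toContinuousLinearMap) z := Complex.conjCLE.toContinuousLinearMap.hasFDerivAt
  have hQc : HasFDerivAt (fun w => pS d (starRingEnd ℂ w))
      ((((1 : ℂ →L[ℂ] ℂ).smulRight (dS d (starRingEnd ℂ z))).restrictScalars ℝ).comp
        Complex.conjCLE.toContinuousLinearMap) z :=
    HasFDerivAt.comp z (hQ'.hasFDerivAt.restrictScalars ℝ) hconj
  have hF : HasFDerivAt (fun w => K + pS c w + pS d (starRingEnd ℂ w))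
      (((1 : ℂ →L[ℂ] ℂ).smulRight (dS c z)).restrictScalars ℝ +
        (((1 : ℂ →L[ℂ] ℂ).smulRight (dS d (starRingEnd ℂ z))).restrictScalars ℝ).comp
          Complex.conjCLE.toContinuousLinearMap) z := by
    have h := ((hasFDerivAt_const K z).add hP).add hQc
    rw [zero_add] at h
    exact h
  have hf := hF.fderiv
  constructor
  · rw [wirtingerDz, hf]
    simp [Complex.conjCLE_apply]
    linear_combination ((dS d (starRingEnd ℂ z) - dS c z)/2) * Complex.I_sq
  · rw [wirtingerDzbar, hf]
    simp [Complex.conjCLE_apply]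
    linear_combination ((dS c z - dS d (starRingEnd ℂ z))/2) * Complex.I_sq

lemma polar_pow (r θ : ℝ) (m n : ℕ) :
    (Complex.polarCoord.symm (r, θ)) ^ m * (starRingEnd ℂ) (Complex.polarCoord.symm (r, θ)) ^ n
      = ((r ^ (m + n) : ℝ) : ℂ) * Complex.exp ((((m : ℝ) - n) * θ : ℝ) * Complex.I) := by
  have base : Complex.polarCoord.symm (r, θ) = (r : ℂ) * Complex.exp ((θ : ℂ) * Complex.I) := by
    rw [Complex.polarCoord_symm_apply, Complex.exp_mul_I, ← Complex.ofReal_cos,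
      ← Complex.ofReal_sin]
  have hconj : (starRingEnd ℂ) (Complex.polarCoord.symm (r, θ))
      = (r : ℂ) * Complex.exp (-((θ : ℂ) * Complex.I)) := by
    rw [base, map_mul, Complex.conj_ofReal, ← Complex.exp_conj]
    congr 2
    simp [Complex.conj_ofReal]
  rw [hconj, base, mul_pow, mul_pow, ← Complex.exp_nat_mul, ← Complex.exp_nat_mul]
  rw [mul_mul_mul_comm, ← Complex.exp_add]
  push_cast
  ring_nf

lemma integral_monomial {R : ℝ} (hR : 0 < R) (m n : ℕ) :
    (∫ z in closedBall (0:ℂ) R, z ^ m * (starRingEnd ℂ) z ^ n) =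
      if m = n then ((Real.pi * R ^ (2 * m + 2) / (m + 1) : ℝ) : ℂ) else 0 := by
  have hmeas : MeasurableSet (closedBall (0:ℂ) R) := measurableSet_closedBall
  rw [← MeasureTheory.integral_indicator hmeas, ← Complex.integral_comp_polarCoord_symm]
  have h1 : ∀ p ∈ polarCoord.target,
      (p.1 • (closedBall (0:ℂ) R).indicator (fun z => z ^ m * (starRingEnd ℂ) z ^ n)
        (Complex.polarCoord.symm p)) =
      (Set.Ioc 0 R ×ˢ Set.Ioo (-Real.pi) Real.pi).indicator
        (fun p : ℝ × ℝ => ((p.1 ^ (m + n + 1) : ℝ) : ℂ) *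
          Complex.exp ((((m : ℝ) - n) * p.2 : ℝ) * Complex.I)) p := by
    rintro ⟨r, θ⟩ hp
    rw [polarCoord_target] at hp
    obtain ⟨hr, hθ⟩ := hp
    simp only [Set.mem_Ioi] at hr
    have habs : ‖Complex.polarCoord.symm (r, θ)‖ = r := by
      rw [Complex.norm_polarCoord_symm, abs_of_pos hr]
    by_cases hrR : r ≤ R
    · rw [Set.indicator_of_mem, Set.indicator_of_mem]
      · rw [polar_pow]
        rw [Complex.real_smul]
        rw [← mul_assoc, ← Complex.ofReal_mul]
        congr 2
        ring
      · exact Set.mem_prod.mpr ⟨⟨hr, hrR⟩, hθ⟩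
      · rw [mem_closedBall_zero_iff]
        simpa [habs, _root_.abs_of_pos hr] using hrR
    · rw [Set.indicator_of_notMem, Set.indicator_of_notMem]
      · simp
      · rintro ⟨hmem, -⟩
        exact hrR hmem.2
      · rw [mem_closedBall_zero_iff]
        simpa [habs, _root_.abs_of_pos hr] using hrR
  rw [setIntegral_congr_fun polarCoord.open_target.measurableSet h1]
  rw [setIntegral_indicator ((measurableSet_Ioc).prod measurableSet_Ioo)]
  have hsub : polarCoord.target ∩ (Set.Ioc 0 R ×ˢ Set.Ioo (-Real.pi) Real.pi) =
      Set.Ioc 0 R ×ˢ Set.Ioo (-Real.pi) Real.pi := by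
    rw [Set.inter_eq_right, polarCoord_target]
    rintro ⟨r, θ⟩ ⟨h1', h2'⟩
    exact ⟨h1'.1, h2'⟩
  rw [hsub]
  rw [Measure.volume_eq_prod, setIntegral_prod_mul (fun r : ℝ => ((r ^ (m + n + 1) : ℝ) : ℂ))
    (fun θ : ℝ => Complex.exp ((((m : ℝ) - n) * θ : ℝ) * Complex.I))]
  have hr_int : (∫ r in Set.Ioc 0 R, ((r ^ (m + n + 1) : ℝ) : ℂ)) =
      ((R ^ (m + n + 2) / (m + n + 2) : ℝ) : ℂ) := by
    rw [← intervalIntegral.integral_of_le hR.le]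
    rw [intervalIntegral.integral_ofReal]
    norm_num [integral_pow]
    push_cast
    ring
  rw [hr_int]
  by_cases hmn : m = n
  · subst hmn
    have : (fun θ : ℝ => Complex.exp ((((m : ℝ) - m) * θ : ℝ) * Complex.I)) = fun _ => (1:ℂ) := by
      funext θ; simp
    rw [this]
    rw [if_pos rfl]
    rw [MeasureTheory.setIntegral_const]
    simp only [measureReal_def, Real.volume_Ioo]
    rw [ENNReal.toReal_ofReal (by linarith [Real.pi_pos] : (0:ℝ) ≤ Real.pi - -Real.pi)]
    rw [Complex.real_smul, mul_one, ← Complex.ofReal_mul, Complex.ofReal_inj]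
    have hm2 : ((m:ℝ) + m + 2) ≠ 0 := by positivity
    have hm1 : ((m:ℝ) + 1) ≠ 0 := by positivity
    field_simp
    ring
  · rw [if_neg hmn]
    have hθ_int : (∫ θ in Set.Ioo (-Real.pi) Real.pi,
        Complex.exp ((((m : ℝ) - n) * θ : ℝ) * Complex.I)) = 0 := by
      rw [← MeasureTheory.integral_Ioc_eq_integral_Ioo,
        ← intervalIntegral.integral_of_le (by linarith [Real.pi_pos] : -Real.pi ≤ Real.pi)]
      have hform : ∀ θ : ℝ, Complex.exp ((((m : ℝ) - n) * θ : ℝ) * Complex.I) =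
          Complex.exp ((((m:ℂ) - n) * Complex.I) * θ) := by
        intro θ; congr 1; push_cast; ring
      simp_rw [hform]
      have hc : ((m:ℂ) - n) * Complex.I ≠ 0 := by
        simp only [ne_eq, mul_eq_zero, Complex.I_ne_zero, or_false, sub_eq_zero]
        exact_mod_cast fun h => hmn (by exact_mod_cast h)
      rw [integral_exp_mul_complex hc]
      set k : ℤ := (m:ℤ) - (n:ℤ) with hk
      have key : Complex.exp (((m:ℂ) - n) * Complex.I * Real.pi) =
          Complex.exp (((m:ℂ) - n) * Complex.I * (-Real.pi)) := by
        rw [show ((m:ℂ) - n) * Complex.I * (Real.pi:ℂ) =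
          ((m:ℂ) - n) * Complex.I * (-(Real.pi:ℂ)) + (k:ℂ) * (2 * (Real.pi:ℂ) * Complex.I) by
            rw [hk]; push_cast; ring]
        rw [Complex.exp_add, Complex.exp_int_mul_two_pi_mul_I, mul_one]
      rw [Complex.ofReal_neg, key, sub_self, zero_div]
    rw [hθ_int, mul_zero]

lemma integral_dS_prod {c d : ℕ → ℂ} {Mc Md : ℝ} (hc : ∀ n, ‖c n‖ ≤ Mc) (hd : ∀ n, ‖d n‖ ≤ Md)
    {R : ℝ} (hR0 : 0 < R) (hR1 : R < 1) :
    (∫ z in closedBall (0:ℂ) R, dS c z * dS d (starRingEnd ℂ z)) =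
      (Real.pi : ℂ) * ∑' m : ℕ, ((m:ℂ)+1) * c m * d m * (R:ℂ) ^ (2*m+2) := by
  have hMc : 0 ≤ Mc := le_trans (norm_nonneg _) (hc 0)
  have hMd : 0 ≤ Md := le_trans (norm_nonneg _) (hd 0)
  set u : ℕ × ℕ → ℂ → ℂ := fun p z =>
    (((p.1:ℂ)+1) * c p.1 * z ^ p.1) * (((p.2:ℂ)+1) * d p.2 * (starRingEnd ℂ z) ^ p.2) with hu
  have step1 : ∀ z ∈ closedBall (0:ℂ) R, dS c z * dS d (starRingEnd ℂ z) = ∑' p : ℕ × ℕ, u p z := by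
    intro z hz
    have hz' : ‖z‖ ≤ R := mem_closedBall_zero_iff.mp hz
    have hzc : ‖(starRingEnd ℂ) z‖ ≤ R := by rwa [RCLike.norm_conj]
    exact tsum_mul_tsum_of_summable_norm (summable_dS_norm hc hz' hR1)
      (summable_dS_norm hd hzc hR1)
  rw [setIntegral_congr_fun measurableSet_closedBall step1]
  have hBl : ∀ p : ℕ × ℕ, ∀ z ∈ closedBall (0:ℂ) R,
      ‖u p z‖ ≤ ((p.1:ℝ)+1)*Mc*R^p.1 * (((p.2:ℝ)+1)*Md*R^p.2) := by
    rintro ⟨m, n⟩ z hz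
    have hz' : ‖z‖ ≤ R := mem_closedBall_zero_iff.mp hz
    have hzc : ‖(starRingEnd ℂ) z‖ ≤ R := by rwa [RCLike.norm_conj]
    rw [hu]
    dsimp only
    rw [norm_mul]
    exact mul_le_mul (dS_term_bound hc hz' m) (dS_term_bound hd hzc n)
      (norm_nonneg _) (by positivity)
  have hsum1 : Summable (fun m : ℕ => ((m:ℝ)+1)*Mc*R^m) := summable_aux hMc hR0.le hR1
  have hsum2 : Summable (fun n : ℕ => ((n:ℝ)+1)*Md*R^n) := summable_aux hMd hR0.le hR1
  have hb : ∀ p : ℕ × ℕ, (∫⁻ z in closedBall (0:ℂ) R, ‖u p z‖₊) ≤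
      ENNReal.ofReal (((p.1:ℝ)+1)*Mc*R^p.1 * (((p.2:ℝ)+1)*Md*R^p.2)) *
        volume (closedBall (0:ℂ) R) := by
    intro p
    have h1 : (∫⁻ z in closedBall (0:ℂ) R, ‖u p z‖₊) ≤
        ∫⁻ _ in closedBall (0:ℂ) R,
          ENNReal.ofReal (((p.1:ℝ)+1)*Mc*R^p.1 * (((p.2:ℝ)+1)*Md*R^p.2)) := by
      apply setLIntegral_mono (by fun_prop)
      intro z hz
      rw [← enorm_eq_nnnorm, ← ofReal_norm]
      exact ENNReal.ofReal_le_ofReal (hBl p z hz)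
    rwa [setLIntegral_const] at h1
  have hne : (∑' p : ℕ × ℕ, ∫⁻ z in closedBall (0:ℂ) R, ‖u p z‖₊) ≠ ⊤ := by
    apply ne_top_of_le_ne_top _ (ENNReal.tsum_le_tsum hb)
    rw [ENNReal.tsum_mul_right]
    apply ENNReal.mul_ne_top _ (measure_closedBall_lt_top).ne
    have hsplit : ∀ p : ℕ × ℕ, ENNReal.ofReal (((p.1:ℝ)+1)*Mc*R^p.1 * (((p.2:ℝ)+1)*Md*R^p.2)) =
        ENNReal.ofReal (((p.1:ℝ)+1)*Mc*R^p.1) * ENNReal.ofReal (((p.2:ℝ)+1)*Md*R^p.2) := by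
      intro p; rw [ENNReal.ofReal_mul (by positivity)]
    rw [tsum_congr hsplit, ENNReal.tsum_prod']
    have inner : ∀ m : ℕ, (∑' n : ℕ, ENNReal.ofReal (((m:ℝ)+1)*Mc*R^m) *
        ENNReal.ofReal (((n:ℝ)+1)*Md*R^n)) =
        ENNReal.ofReal (((m:ℝ)+1)*Mc*R^m) * ∑' n : ℕ, ENNReal.ofReal (((n:ℝ)+1)*Md*R^n) := by
      intro m; rw [ENNReal.tsum_mul_left]
    rw [tsum_congr inner, ENNReal.tsum_mul_right]
    apply ENNReal.mul_ne_top
    · rw [← ENNReal.ofReal_tsum_of_nonneg (fun m => by positivity) hsum1]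
      exact ENNReal.ofReal_ne_top
    · rw [← ENNReal.ofReal_tsum_of_nonneg (fun n => by positivity) hsum2]
      exact ENNReal.ofReal_ne_top
  have key := MeasureTheory.integral_tsum (μ := volume.restrict (closedBall (0:ℂ) R)) (f := u)
    (fun p => ((Continuous.mul (continuous_const.mul (continuous_pow p.1))
      (continuous_const.mul (Complex.continuous_conj.pow p.2)))).aestronglyMeasurable) hne
  rw [key]
  have hint : ∀ p : ℕ × ℕ, (∫ z in closedBall (0:ℂ) R, u p z) =
      (((p.1:ℂ)+1) * c p.1 * (((p.2:ℂ)+1) * d p.2)) *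
        (if p.1 = p.2 then ((Real.pi * R ^ (2 * p.1 + 2) / (p.1 + 1) : ℝ) : ℂ) else 0) := by
    rintro ⟨m, n⟩
    have : ∀ z : ℂ, u (m, n) z =
        (((m:ℂ)+1) * c m * (((n:ℂ)+1) * d n)) * (z ^ m * (starRingEnd ℂ) z ^ n) := by
      intro z; rw [hu]; ring
    simp_rw [this]
    rw [MeasureTheory.integral_const_mul, integral_monomial hR0]
  rw [tsum_congr hint]
  have hdiaginj : Function.Injective (fun m : ℕ => ((m, m) : ℕ × ℕ)) := by
    intro a b h
    exact (Prod.ext_iff.mp h).1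
  rw [← Function.Injective.tsum_eq hdiaginj]
  · have : ∀ m : ℕ, (((m:ℂ)+1) * c m * (((m:ℂ)+1) * d m)) *
        (if m = m then ((Real.pi * R ^ (2 * m + 2) / (m + 1) : ℝ) : ℂ) else 0) =
        (Real.pi : ℂ) * (((m:ℂ)+1) * c m * d m * (R:ℂ) ^ (2*m+2)) := by
      intro m
      rw [if_pos rfl]
      have hm1 : ((m:ℂ) + 1) ≠ 0 := by
        exact_mod_cast Nat.cast_add_one_ne_zero (R := ℂ) m
      push_cast
      field_simp
    rw [tsum_congr this, tsum_mul_left]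
  · intro p hp
    rw [Function.mem_support] at hp
    by_cases hpq : p.1 = p.2
    · exact ⟨p.1, by ext <;> simp [hpq]⟩
    · exfalso; apply hp; rw [if_neg hpq, mul_zero]

lemma fc_bound (g : ℂ → ℂ) : ∃ M : ℝ, 0 ≤ M ∧ ∀ l : ℤ, ‖fourierCoeffT g l‖ ≤ M := by
  refine ⟨(1/(2*Real.pi)) * ∫ θ in (0:ℝ)..(2*Real.pi), ‖g (Complex.exp (Complex.I * θ))‖,
    ?_, ?_⟩
  · apply mul_nonneg (by positivity)
    apply intervalIntegral.integral_nonneg (by positivity)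
    intro x _; exact norm_nonneg _
  · intro l
    rw [fourierCoeffT, norm_smul]
    have h1 : ‖(1/(2*Real.pi) : ℝ)‖ = 1/(2*Real.pi) := by
      rw [Real.norm_eq_abs, _root_.abs_of_nonneg (by positivity)]
    rw [h1]
    apply mul_le_mul_of_nonneg_left _ (by positivity)
    calc ‖∫ θ in (0:ℝ)..(2 * Real.pi),
          g (Complex.exp (Complex.I * θ)) * Complex.exp (-Complex.I * l * θ)‖
        ≤ ∫ θ in (0:ℝ)..(2 * Real.pi),
          ‖g (Complex.exp (Complex.I * θ)) * Complex.exp (-Complex.I * l * θ)‖ :=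
          intervalIntegral.norm_integral_le_integral_norm (by positivity)
      _ = ∫ θ in (0:ℝ)..(2 * Real.pi), ‖g (Complex.exp (Complex.I * θ))‖ := by
          apply intervalIntegral.integral_congr
          intro θ _
          simp only
          rw [norm_mul]
          have : ‖Complex.exp (-Complex.I * l * θ)‖ = 1 := by
            rw [Complex.norm_exp]
            simp
          rw [this, mul_one]
lemma norm_natsucc (m : ℕ) : ‖((m:ℂ)+1)‖ = (m:ℝ)+1 := by
  rw [show ((m:ℂ)+1) = ((m+1 : ℕ) : ℂ) by push_cast; ring, Complex.norm_natCast]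
  push_cast; ring

/-- Helton–Howe type formula: for `f` integrable with `Σ|l||f̂(l)| < ∞` and `η` integrable,
the harmonic extensions `F, G` are smooth on the open unit disk and
`lim_{R↑1} ∫_{|z|≤R} (∂G/∂z ∂F/∂z̄ − ∂F/∂z ∂G/∂z̄) dz∧dz̄ = 2πi Σ_l l f̂(l) η̂(−l)`,
the series converging absolutely. -/
theorem stmt_11 (f η : ℂ → ℂ)
    (hf_int : IntervalIntegrable (fun θ : ℝ => f (Complex.exp (Complex.I * θ))) volume 0
      (2 * Real.pi))
    (hf_sum : Summable (fun l : ℤ => (|l| : ℝ) * ‖fourierCoeffT f l‖))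
    (hη : IntervalIntegrable (fun θ : ℝ => η (Complex.exp (Complex.I * θ))) volume 0
      (2 * Real.pi))
    (F G : ℂ → ℂ)
    (hF : ∀ z : ℂ, F z = fourierCoeffT f 0 + (∑' l : ℕ, fourierCoeffT f (l + 1) * z ^ (l + 1))
      + ∑' l : ℕ, fourierCoeffT f (-(l + 1)) * (starRingEnd ℂ z) ^ (l + 1))
    (hG : ∀ z : ℂ, G z = fourierCoeffT η 0 + (∑' l : ℕ, fourierCoeffT η (l + 1) * z ^ (l + 1))
      + ∑' l : ℕ, fourierCoeffT η (-(l + 1)) * (starRingEnd ℂ z) ^ (l + 1)) :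
    ContDiffOn ℝ (⊤ : ℕ∞) F (ball (0 : ℂ) 1) ∧ ContDiffOn ℝ (⊤ : ℕ∞) G (ball (0 : ℂ) 1) ∧
    Summable (fun l : ℤ => ‖(l : ℂ) * fourierCoeffT f l * fourierCoeffT η (-l)‖) ∧
    Tendsto
      (fun R : ℝ => ∫ z in closedBall (0 : ℂ) R,
        (wirtingerDz G z * wirtingerDzbar F z - wirtingerDz F z * wirtingerDzbar G z) *
          (-2 * Complex.I))
      (nhdsWithin 1 (Set.Iio 1))
      (nhds ((2 * Real.pi * Complex.I) *
        ∑' l : ℤ, (l : ℂ) * fourierCoeffT f l * fourierCoeffT η (-l))) := by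
  obtain ⟨Ma, hMa0, hMa⟩ := fc_bound f
  obtain ⟨Mb, hMb0, hMb⟩ := fc_bound η
  set cF : ℕ → ℂ := fun n => fourierCoeffT f ((n:ℤ)+1) with hcFdef
  set dF : ℕ → ℂ := fun n => fourierCoeffT f (-((n:ℤ)+1)) with hdFdef
  set cG : ℕ → ℂ := fun n => fourierCoeffT η ((n:ℤ)+1) with hcGdef
  set dG : ℕ → ℂ := fun n => fourierCoeffT η (-((n:ℤ)+1)) with hdGdef
  have hcF : ∀ n, ‖cF n‖ ≤ Ma := fun n => hMa _
  have hdF : ∀ n, ‖dF n‖ ≤ Ma := fun n => hMa _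
  have hcG : ∀ n, ‖cG n‖ ≤ Mb := fun n => hMb _
  have hdG : ∀ n, ‖dG n‖ ≤ Mb := fun n => hMb _
  have hFeq : F = fun z => fourierCoeffT f 0 + pS cF z + pS dF (starRingEnd ℂ z) :=
    funext fun z => by rw [hF z, hcFdef, hdFdef]; rfl
  have hGeq : G = fun z => fourierCoeffT η 0 + pS cG z + pS dG (starRingEnd ℂ z) :=
    funext fun z => by rw [hG z, hcGdef, hdGdef]; rfl
  have hinj1 : Function.Injective (fun n : ℕ => ((n:ℤ)+1)) := by
    intro p q h; simpa using h
  have hinj2 : Function.Injective (fun n : ℕ => -((n:ℤ)+1)) := by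
    intro p q h; simpa using h
  have hsum_cF : Summable (fun n : ℕ => ((n:ℝ)+1) * ‖cF n‖) := by
    apply (hf_sum.comp_injective hinj1).congr
    intro n
    simp only [Function.comp_apply, hcFdef]
    congr 1
    push_cast
    rw [_root_.abs_of_nonneg (by positivity)]
  have hsum_dF : Summable (fun n : ℕ => ((n:ℝ)+1) * ‖dF n‖) := by
    apply (hf_sum.comp_injective hinj2).congr
    intro n
    simp only [Function.comp_apply, hdFdef]
    congr 1
    push_cast
    rw [abs_neg, _root_.abs_of_nonneg (by positivity)]
  have hsummable : Summable
      (fun l : ℤ => ‖(l : ℂ) * fourierCoeffT f l * fourierCoeffT η (-l)‖) := by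
    apply Summable.of_nonneg_of_le (fun l => norm_nonneg _) _ (hf_sum.mul_right Mb)
    intro l
    rw [norm_mul, norm_mul]
    have h1 : ‖(l : ℂ)‖ = (|l| : ℝ) := by
      rw [Complex.norm_intCast]
    rw [h1]
    calc (|l| : ℝ) * ‖fourierCoeffT f l‖ * ‖fourierCoeffT η (-l)‖
        ≤ (|l| : ℝ) * ‖fourierCoeffT f l‖ * Mb :=
          mul_le_mul_of_nonneg_left (hMb _) (by positivity)
      _ = (|l| : ℝ) * ‖fourierCoeffT f l‖ * Mb := rfl
  have hS1sum : Summable (fun m : ℕ => ((m:ℂ)+1) * cG m * dF m) := by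
    apply Summable.of_norm
    apply Summable.of_nonneg_of_le (fun m => norm_nonneg _) _ (hsum_dF.mul_right Mb)
    intro m
    rw [norm_mul, norm_mul, norm_natsucc]
    calc ((m:ℝ)+1) * ‖cG m‖ * ‖dF m‖ ≤ ((m:ℝ)+1) * Mb * ‖dF m‖ :=
          mul_le_mul_of_nonneg_right
            (mul_le_mul_of_nonneg_left (hcG m) (by positivity)) (norm_nonneg _)
      _ = ((m:ℝ)+1) * ‖dF m‖ * Mb := by ring
  have hS2sum : Summable (fun m : ℕ => ((m:ℂ)+1) * cF m * dG m) := by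
    apply Summable.of_norm
    apply Summable.of_nonneg_of_le (fun m => norm_nonneg _) _ (hsum_cF.mul_right Mb)
    intro m
    rw [norm_mul, norm_mul, norm_natsucc]
    exact mul_le_mul_of_nonneg_left (hdG m) (by positivity)
  refine ⟨?_, ?_, hsummable, ?_⟩
  · rw [hFeq]; exact contDiffOn_harm hcF hdF _
  · rw [hGeq]; exact contDiffOn_harm hcG hdG _
  set S1 : ℂ := ∑' m : ℕ, ((m:ℂ)+1) * cG m * dF m with hS1def
  set S2 : ℂ := ∑' m : ℕ, ((m:ℂ)+1) * cF m * dG m with hS2def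
  have e2 : (fun n : ℕ => ((n:ℂ)+1) * cF n * dG n) = (fun n : ℕ =>
      ((((n:ℤ)+1 : ℤ)) : ℂ) * fourierCoeffT f ((n:ℤ)+1) * fourierCoeffT η (-((n:ℤ)+1))) := by
    funext n; rw [hcFdef, hdGdef]; push_cast; ring
  have e3 : (fun n : ℕ => -(((n:ℂ)+1) * cG n * dF n)) = (fun n : ℕ =>
      (((-((n:ℤ)+1) : ℤ)) : ℂ) * fourierCoeffT f (-((n:ℤ)+1)) *
        fourierCoeffT η (-(-((n:ℤ)+1)))) := by
    funext n
    rw [neg_neg, hcGdef, hdFdef]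
    push_cast; ring
  have pos : HasSum (fun n : ℕ =>
      ((((n:ℤ)+1 : ℤ)) : ℂ) * fourierCoeffT f ((n:ℤ)+1) * fourierCoeffT η (-((n:ℤ)+1))) S2 := by
    have h := hS2sum.hasSum
    rw [← hS2def] at h
    rwa [e2] at h
  have neg : HasSum (fun n : ℕ =>
      (((-((n:ℤ)+1) : ℤ)) : ℂ) * fourierCoeffT f (-((n:ℤ)+1)) *
        fourierCoeffT η (-(-((n:ℤ)+1)))) (-S1) := by
    have h := hS1sum.hasSum
    rw [← hS1def] at h
    have h2 := h.neg
    rwa [e3] at h2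
  have hZkey : HasSum (fun l : ℤ => (l : ℂ) * fourierCoeffT f l * fourierCoeffT η (-l))
      (S2 + (((0:ℤ) : ℂ) * fourierCoeffT f 0 * fourierCoeffT η (-(0:ℤ))) + (-S1)) :=
    HasSum.of_add_one_of_neg_add_one pos neg
  set Φ : ℝ → ℂ := fun R =>
    ((Real.pi:ℂ) * (∑' m : ℕ, ((m:ℂ)+1) * cG m * dF m * (R:ℂ) ^ (2*m+2)) -
     (Real.pi:ℂ) * (∑' m : ℕ, ((m:ℂ)+1) * cF m * dG m * (R:ℂ) ^ (2*m+2))) * (-2*Complex.I)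
    with hΦdef
  have hIoo : Set.Ioo (0:ℝ) 1 ∈ nhdsWithin (1:ℝ) (Set.Iio 1) :=
    Ioo_mem_nhdsLT_of_mem (by constructor <;> norm_num)
  have hT : ∀ (B : ℝ) (c d : ℕ → ℂ), (∀ n, ‖c n‖ ≤ B) →
      Summable (fun m : ℕ => ((m:ℝ)+1) * ‖d m‖) →
      Tendsto (fun R : ℝ => ∑' m : ℕ, ((m:ℂ)+1) * c m * d m * (R:ℂ) ^ (2*m+2))
        (nhdsWithin 1 (Set.Iio 1)) (nhds (∑' m : ℕ, ((m:ℂ)+1) * c m * d m)) := by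
    intro B c d hcb hds
    have hB0 : 0 ≤ B := le_trans (norm_nonneg _) (hcb 0)
    have hbound : Summable (fun m : ℕ => ((m:ℝ)+1) * B * ‖d m‖) :=
      (hds.mul_right B).congr (fun m => by ring)
    apply tendsto_tsum_of_dominated_convergence hbound
    · intro m
      have hc2 : Continuous (fun R : ℝ => ((m:ℂ)+1) * c m * d m * (R:ℂ) ^ (2*m+2)) :=
        continuous_const.mul (Complex.continuous_ofReal.pow _)
      have h3 := hc2.tendsto 1
      simp only [Complex.ofReal_one, one_pow, mul_one] at h3
      exact h3.mono_left nhdsWithin_le_nhds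
    · apply Filter.eventually_of_mem hIoo
      intro R hR m
      rw [norm_mul, norm_mul, norm_mul, norm_natsucc, norm_pow, Complex.norm_real,
        Real.norm_eq_abs]
      have hR1 : |R| ≤ 1 := by
        rw [_root_.abs_of_pos hR.1]; exact hR.2.le
      calc ((m:ℝ)+1) * ‖c m‖ * ‖d m‖ * |R| ^ (2*m+2)
          ≤ ((m:ℝ)+1) * B * ‖d m‖ * 1 := by
            apply mul_le_mul _ (pow_le_one₀ (abs_nonneg R) hR1) (by positivity) (by positivity)
            exact mul_le_mul_of_nonneg_right
              (mul_le_mul_of_nonneg_left (hcb m) (by positivity)) (norm_nonneg _)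
        _ = ((m:ℝ)+1) * B * ‖d m‖ := by ring
  have T1 := hT Mb cG dF hcG hsum_dF
  have T2' := hT Mb dG cF hdG hsum_cF
  have T2 : Tendsto (fun R : ℝ => ∑' m : ℕ, ((m:ℂ)+1) * cF m * dG m * (R:ℂ) ^ (2*m+2))
      (nhdsWithin 1 (Set.Iio 1)) (nhds S2) := by
    have e0 : (∑' m : ℕ, ((m:ℂ)+1) * dG m * cF m) = S2 := by
      rw [hS2def]; exact tsum_congr fun m => by ring
    rw [← e0]
    apply T2'.congr
    intro R
    exact tsum_congr fun m => by ring
  have tendstoΦ : Tendsto Φ (nhdsWithin 1 (Set.Iio 1))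
      (nhds (((Real.pi:ℂ) * S1 - (Real.pi:ℂ) * S2) * (-2*Complex.I))) := by
    rw [hΦdef]
    exact ((T1.const_mul ((Real.pi:ℂ))).sub (T2.const_mul ((Real.pi:ℂ)))).mul_const
      (-2*Complex.I)
  have heventeq : (fun R : ℝ => ∫ z in closedBall (0 : ℂ) R,
      (wirtingerDz G z * wirtingerDzbar F z - wirtingerDz F z * wirtingerDzbar G z) *
        (-2 * Complex.I)) =ᶠ[nhdsWithin 1 (Set.Iio 1)] Φ := by
    apply Filter.eventuallyEq_of_mem hIoo
    intro R hR
    obtain ⟨hR0, hR1⟩ := hR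
    have hptw : ∀ z ∈ closedBall (0:ℂ) R,
        (wirtingerDz G z * wirtingerDzbar F z - wirtingerDz F z * wirtingerDzbar G z) *
          (-2 * Complex.I) =
        (dS cG z * dS dF (starRingEnd ℂ z) - dS cF z * dS dG (starRingEnd ℂ z)) *
          (-2 * Complex.I) := by
      intro z hz
      have hz1 : ‖z‖ < 1 := lt_of_le_of_lt (mem_closedBall_zero_iff.mp hz) hR1
      obtain ⟨eF1, eF2⟩ := wirtinger_pair hcF hdF (fourierCoeffT f 0) hz1
      obtain ⟨eG1, eG2⟩ := wirtinger_pair hcG hdG (fourierCoeffT η 0) hz1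
      rw [hFeq, hGeq, eF1, eF2, eG1, eG2]
    simp only
    rw [setIntegral_congr_fun measurableSet_closedBall hptw]
    have hmapsto : Set.MapsTo (starRingEnd ℂ) (closedBall (0:ℂ) R) (closedBall (0:ℂ) R) := by
      intro z hz
      rw [mem_closedBall_zero_iff] at hz ⊢
      rwa [RCLike.norm_conj]
    have hX : IntegrableOn (fun z => dS cG z * dS dF (starRingEnd ℂ z))
        (closedBall (0:ℂ) R) volume := by
      apply ContinuousOn.integrableOn_compact (isCompact_closedBall _ _)
      exact (continuousOn_dS hcG hR0.le hR1).mul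
        ((continuousOn_dS hdF hR0.le hR1).comp Complex.continuous_conj.continuousOn hmapsto)
    have hY : IntegrableOn (fun z => dS cF z * dS dG (starRingEnd ℂ z))
        (closedBall (0:ℂ) R) volume := by
      apply ContinuousOn.integrableOn_compact (isCompact_closedBall _ _)
      exact (continuousOn_dS hcF hR0.le hR1).mul
        ((continuousOn_dS hdG hR0.le hR1).comp Complex.continuous_conj.continuousOn hmapsto)
    rw [MeasureTheory.integral_mul_const, MeasureTheory.integral_sub hX hY,
      integral_dS_prod hcG hdF hR0 hR1, integral_dS_prod hcF hdG hR0 hR1, hΦdef]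
  have main := tendstoΦ.congr' heventeq.symm
  convert main using 2
  rw [hZkey.tsum_eq]
  push_cast
  ring
end

section
/- Let H be a complex Hilbert space, B ∈ B(H) self-adjoint, T₀ ∈ B(H) a contraction (‖T₀‖ ≤ 1), and T_t := e^{itB} T₀ for t ∈ ℝ. Then for every l ≥ 1 there exists a constant c_l > 0 depending only on l such that for all k ≥ 1 and all s, s₁, s₂ ∈ ℝ: ‖(d^l/dt^l)|_{t=s} T_t^k‖ ≤ c_l k^l ‖B‖^l, and ‖(d^l/dt^l)|_{t=s₂} T_t^k − (d^l/dt^l)|_{t=s₁} T_t^k‖ ≤ |s₂ − s₁| c_{l+1} k^{l+1} ‖B‖^{l+1}, where the derivatives are taken in the operator norm. -/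
/-!
Since `B` is self-adjoint, `e^{itB}` is unitary, so `g t := e^{itB} T₀` has `n`-th derivative
`(iB)^n g t`, of norm at most `‖B‖^n`. Writing `g^(k+1) = g * g^k`, the Leibniz rule and the
binomial theorem give by induction on `k` that the `l`-th derivative of `g^k` has norm at most
`(k ‖B‖)^l`, which is the first estimate with `c_l = 1`; the second is the mean value inequality
applied to the `l`-th derivative.
-/

open NormedSpace
open scoped ContDiff

section Leibniz
variable {𝕜 A : Type*} [NontriviallyNormedField 𝕜] [NormedRing A] [NormedAlgebra 𝕜 A]

theorem norm_iteratedDeriv_mul_le {f g : 𝕜 → A} {n : ℕ} (hf : ContDiff 𝕜 n f)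
    (hg : ContDiff 𝕜 n g) (x : 𝕜) :
    ‖iteratedDeriv n (fun y => f y * g y) x‖ ≤ ∑ i ∈ Finset.range (n + 1),
      (n.choose i : ℝ) * ‖iteratedDeriv i f x‖ * ‖iteratedDeriv (n - i) g x‖ := by
  simpa only [← norm_iteratedFDeriv_eq_norm_iteratedDeriv] using
    norm_iteratedFDeriv_mul_le hf hg x le_rfl

theorem norm_iteratedDeriv_pow_le {g : 𝕜 → A} {M : ℝ} (hM : 0 ≤ M) (hg : ContDiff 𝕜 ∞ g)
    (hbound : ∀ n x, ‖iteratedDeriv n g x‖ ≤ M ^ n) {k : ℕ} (hk : k ≠ 0) (l : ℕ) (x : 𝕜) :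
    ‖iteratedDeriv l (fun y => g y ^ k) x‖ ≤ (k * M) ^ l := by
  induction k, Nat.one_le_iff_ne_zero.mpr hk using Nat.le_induction generalizing l with
  | base => simpa using hbound l x
  | succ k hk ih =>
    simp_rw [pow_succ']
    calc ‖iteratedDeriv l (fun y => g y * g y ^ k) x‖
        ≤ ∑ i ∈ Finset.range (l + 1),
            (l.choose i : ℝ) * ‖iteratedDeriv i g x‖ * ‖iteratedDeriv (l - i) (g · ^ k) x‖ :=
          norm_iteratedDeriv_mul_le (hg.of_le (mod_cast le_top))
            ((hg.pow k).of_le (mod_cast le_top)) x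
      _ ≤ ∑ i ∈ Finset.range (l + 1), (l.choose i : ℝ) * M ^ i * (k * M) ^ (l - i) := by
          gcongr with i
          · exact hbound i x
          · exact ih (by omega) (l - i)
      _ = (M + k * M) ^ l := by
          rw [add_pow]; exact Finset.sum_congr rfl fun i _ => by ring
      _ = ((k + 1 : ℕ) * M) ^ l := by push_cast; ring
end Leibniz

theorem norm_iteratedDeriv_sub_le_mul_abs {E : Type*} [NormedAddCommGroup E] [NormedSpace ℝ E]
    {f : ℝ → E} {l : ℕ} (hf : ContDiff ℝ (l + 1) f) {K : ℝ}
    (hK : ∀ t, ‖iteratedDeriv (l + 1) f t‖ ≤ K) (s₁ s₂ : ℝ) :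
    ‖iteratedDeriv l f s₂ - iteratedDeriv l f s₁‖ ≤ K * |s₂ - s₁| := by
  have hdiff : Differentiable ℝ (iteratedDeriv l f) :=
    hf.differentiable_iteratedDeriv l (mod_cast l.lt_succ_self)
  simpa only [Real.norm_eq_abs] using
    Convex.norm_image_sub_le_of_norm_deriv_le (fun t _ => hdiff t)
      (fun t _ => iteratedDeriv_succ (f := f) ▸ hK t) convex_univ
      (Set.mem_univ s₁) (Set.mem_univ s₂)

theorem norm_pow_mul_le {R : Type*} [NormedRing R] (a b : R) (n : ℕ) :
    ‖a ^ n * b‖ ≤ ‖a‖ ^ n * ‖b‖ := by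
  induction n with
  | zero => simp
  | succ n ih =>
    calc ‖a ^ (n + 1) * b‖ ≤ ‖a‖ * ‖a ^ n * b‖ := by
          rw [pow_succ', mul_assoc]; exact norm_mul_le _ _
      _ ≤ ‖a‖ * (‖a‖ ^ n * ‖b‖) := by gcongr
      _ = ‖a‖ ^ (n + 1) * ‖b‖ := by ring

section ExpSmul
variable {A : Type*} [NormedRing A] [NormedAlgebra ℝ A] [CompleteSpace A]

theorem hasDerivAt_exp_smul_mul (C T : A) (t : ℝ) :
    HasDerivAt (fun u : ℝ => exp (u • C) * T) (C * (exp (t • C) * T)) t := by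
  simpa only [mul_assoc] using (hasDerivAt_exp_smul_const' C t).mul_const T

theorem iteratedDeriv_exp_smul_mul (C T : A) (n : ℕ) :
    iteratedDeriv n (fun u : ℝ => exp (u • C) * T) = fun t => C ^ n * (exp (t • C) * T) := by
  induction n with
  | zero => simp
  | succ n ih =>
    ext t
    rw [iteratedDeriv_succ, ih, ((hasDerivAt_exp_smul_mul C T t).const_mul (C ^ n)).deriv,
      ← mul_assoc, ← pow_succ]

theorem contDiff_exp_smul_mul (C T : A) : ContDiff ℝ ∞ (fun u : ℝ => exp (u • C) * T) := by
  refine contDiff_of_differentiable_iteratedDeriv fun n _ => ?_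
  rw [iteratedDeriv_exp_smul_mul]
  exact fun t => ((hasDerivAt_exp_smul_mul C T t).const_mul (C ^ n)).differentiableAt
end ExpSmul

theorem exp_smul_I_smul_mem_unitary {A : Type*} [CStarAlgebra A] {b : A} (hb : IsSelfAdjoint b)
    (t : ℝ) :
    exp (t • Complex.I • b) ∈ unitary A := by
  let +nondep : NormedAlgebra ℚ A := .restrictScalars ℚ ℂ A
  refine exp_mem_unitary_of_mem_skewAdjoint ?_
  rw [skewAdjoint.mem_iff, star_smul, star_smul, hb.star_eq, Complex.star_def, Complex.conj_I,
    star_trivial, neg_smul, smul_neg]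

theorem norm_iteratedDeriv_exp_smul_I_smul_mul_le {A : Type*} [CStarAlgebra A] {b : A}
    (hb : IsSelfAdjoint b) (T : A) (n : ℕ) (t : ℝ) :
    ‖iteratedDeriv n (fun u : ℝ => exp (u • Complex.I • b) * T) t‖ ≤ ‖b‖ ^ n * ‖T‖ := by
  rw [iteratedDeriv_exp_smul_mul]
  calc ‖(Complex.I • b) ^ n * (exp (t • Complex.I • b) * T)‖
      ≤ ‖Complex.I • b‖ ^ n * ‖exp (t • Complex.I • b) * T‖ := norm_pow_mul_le _ _ n
    _ = ‖b‖ ^ n * ‖T‖ := by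
      rw [norm_smul, Complex.norm_I, one_mul,
        CStarRing.norm_coe_unitary_mul ⟨_, exp_smul_I_smul_mem_unitary hb t⟩ T]

/-- For each `l ≥ 1` there is a constant `c l > 0` depending only on `l` such that for any
self-adjoint `B`, contraction `T₀`, and `T_t = e^{itB} T₀`:
`‖(d^l/dt^l)|_{t=s} T_t^k‖ ≤ c_l k^l ‖B‖^l` and
`‖(d^l/dt^l)|_{t=s₂} T_t^k − (d^l/dt^l)|_{t=s₁} T_t^k‖ ≤ |s₂−s₁| c_{l+1} k^{l+1} ‖B‖^{l+1}`. -/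
theorem stmt_13 :
    ∃ c : ℕ → ℝ, (∀ l : ℕ, 1 ≤ l → 0 < c l) ∧
      ∀ (H : Type u) [NormedAddCommGroup H] [InnerProductSpace ℂ H] [CompleteSpace H],
        ∀ B T₀ : H →L[ℂ] H, IsSelfAdjoint B → ‖T₀‖ ≤ 1 →
          ∀ l : ℕ, 1 ≤ l → ∀ k : ℕ, 1 ≤ k → ∀ s s₁ s₂ : ℝ,
            ‖iteratedDeriv l
                (fun t : ℝ => (NormedSpace.exp (((t : ℂ) * Complex.I) • B) * T₀) ^ k) s‖ ≤
              c l * (k : ℝ) ^ l * ‖B‖ ^ l ∧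
            ‖iteratedDeriv l
                (fun t : ℝ => (NormedSpace.exp (((t : ℂ) * Complex.I) • B) * T₀) ^ k) s₂ -
              iteratedDeriv l
                (fun t : ℝ => (NormedSpace.exp (((t : ℂ) * Complex.I) • B) * T₀) ^ k) s₁‖ ≤
              |s₂ - s₁| * c (l + 1) * (k : ℝ) ^ (l + 1) * ‖B‖ ^ (l + 1) := by
  refine ⟨fun _ => 1, fun _ _ => one_pos, fun H _ _ _ B T₀ hB hT₀ l _ k hk s s₁ s₂ => ?_⟩
  have hT : (fun t : ℝ => (exp (((t : ℂ) * Complex.I) • B) * T₀) ^ k) =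
      fun t : ℝ => (exp (t • Complex.I • B) * T₀) ^ k := by
    funext t; rw [mul_smul, Complex.coe_smul]
  have hderiv (n : ℕ) (t : ℝ) :
      ‖iteratedDeriv n (fun u : ℝ => exp (u • Complex.I • B) * T₀) t‖ ≤ ‖B‖ ^ n :=
    (norm_iteratedDeriv_exp_smul_I_smul_mul_le hB T₀ n t).trans
      (mul_le_of_le_one_right (by positivity) hT₀)
  have hsmooth := contDiff_exp_smul_mul (Complex.I • B) T₀
  have hpow := norm_iteratedDeriv_pow_le (norm_nonneg B) hsmooth hderiv (k := k) (by omega)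
  rw [hT]
  constructor
  · simpa only [mul_pow, one_mul] using hpow l s
  · calc _ ≤ (k * ‖B‖) ^ (l + 1) * |s₂ - s₁| :=
          norm_iteratedDeriv_sub_le_mul_abs ((hsmooth.pow k).of_le (mod_cast le_top))
            (hpow (l + 1)) s₁ s₂
      _ = _ := by ring
end

section
/- Let m ≥ 1, let f : 𝕋 → ℂ be integrable with Σ_{k∈ℤ} |k|^m |f̂(k)| < ∞, let H be a complex Hilbert space, B ∈ B(H) self-adjoint, T₀ ∈ B(H) a contraction, and T_s := e^{isB} T₀. Then for every l with 1 ≤ l ≤ m, the map s ↦ f(T_s) is l-times differentiable in the operator norm and (d^l/ds^l) f(T_s) = Σ_{k=0}^{∞} f̂(k) (d^l/ds^l) T_s^k + Σ_{k=1}^{∞} f̂(−k) (d^l/ds^l) (T_s*)^k, where both series converge absolutely in the operator norm. -/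
open Complex MeasureTheory intervalIntegral ContinuousLinearMap
open scoped ContDiff

/-! With `A = I • B`, which is skew-adjoint, `T s = exp (s • A) * T₀` and
`(T s)⋆ = T₀⋆ * exp (s • -A)`, and `exp (s • A)` is unitary. Hence the `n`-th derivatives of both
curves have norm at most `‖B‖ ^ n`, and by the Leibniz rule the `n`-th derivative of their `k`-th
powers has norm at most `(k * ‖B‖) ^ n`. For `n ≤ m` the differentiated series are therefore
dominated by `‖B‖ ^ n * ∑ |k| ^ n * ‖f̂ k‖ < ∞`, and a series of smooth functions with summable
uniform bounds on its derivatives can be differentiated termwise. -/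

section PowerBounds

variable {𝕜 E 𝔸 : Type*} [NontriviallyNormedField 𝕜] [NormedAddCommGroup E] [NormedSpace 𝕜 E]
  [NormedRing 𝔸] [NormedAlgebra 𝕜 𝔸]

theorem norm_pow_le_of_norm_one_le (h1 : ‖(1 : 𝔸)‖ ≤ 1) (a : 𝔸) (n : ℕ) : ‖a ^ n‖ ≤ ‖a‖ ^ n := by
  rcases n with _ | n
  · simpa using h1
  · exact norm_pow_le' a n.succ_pos

theorem norm_iteratedFDeriv_pow_le {G : E → 𝔸} {N : WithTop ℕ∞} (hG : ContDiff 𝕜 N G) {x : E}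
    {M : ℝ} (hM : 0 ≤ M) (h1 : ‖(1 : 𝔸)‖ ≤ 1) {n : ℕ} (hn : n ≤ N)
    (hb : ∀ i ≤ n, ‖iteratedFDeriv 𝕜 i G x‖ ≤ M ^ i) (k : ℕ) :
    ‖iteratedFDeriv 𝕜 n (fun y => G y ^ k) x‖ ≤ (k * M) ^ n := by
  induction k generalizing n with
  | zero =>
    rcases n with _ | n
    · simpa using h1
    · simp [iteratedFDeriv_const_of_ne n.succ_ne_zero]
  | succ k ih =>
    have hGn : ContDiff 𝕜 n G := hG.of_le hn
    simp only [pow_succ]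
    calc ‖iteratedFDeriv 𝕜 n (fun y => G y ^ k * G y) x‖
        ≤ ∑ i ∈ Finset.range (n + 1), (n.choose i : ℝ) *
            ‖iteratedFDeriv 𝕜 i (fun y => G y ^ k) x‖ * ‖iteratedFDeriv 𝕜 (n - i) G x‖ :=
          norm_iteratedFDeriv_mul_le (hGn.pow k) hGn x le_rfl
      _ ≤ ∑ i ∈ Finset.range (n + 1), (n.choose i : ℝ) * (k * M) ^ i * M ^ (n - i) := by
          gcongr with i hi
          · have hin : i ≤ n := Nat.lt_succ_iff.mp (Finset.mem_range.mp hi)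
            exact ih (le_trans (by exact_mod_cast hin) hn) fun j hj => hb j (hj.trans hin)
          · exact hb _ (Nat.sub_le n i)
      _ = (k * M + M) ^ n := by
          rw [add_pow]
          exact Finset.sum_congr rfl fun i _ => by ring
      _ = ((k + 1 : ℕ) * M) ^ n := by push_cast; ring

end PowerBounds

theorem iteratedDeriv_tsum {𝕜 F : Type*} [NontriviallyNormedField 𝕜] [IsRCLikeNormedField 𝕜]
    [NormedAddCommGroup F] [NormedSpace 𝕜 F] [CompleteSpace F]
    {f : ℕ → 𝕜 → F} {v : ℕ → ℕ → ℝ} {N : ℕ∞}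
    (hf : ∀ i, ContDiff 𝕜 N (f i)) (hv : ∀ k : ℕ, (k : ℕ∞) ≤ N → Summable (v k))
    (h'f : ∀ (k i : ℕ) (x : 𝕜), (k : ℕ∞) ≤ N → ‖iteratedFDeriv 𝕜 k (f i) x‖ ≤ v k i)
    {l : ℕ} (hl : (l : ℕ∞) ≤ N) (x : 𝕜) :
    iteratedDeriv l (fun y => ∑' i, f i y) x = ∑' i, iteratedDeriv l (f i) x := by
  simp only [iteratedDeriv_eq_equiv_comp, Function.comp_apply,
    iteratedFDeriv_tsum_apply hf hv h'f hl x]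
  exact ((ContinuousMultilinearMap.piFieldEquiv 𝕜 (Fin l) F).symm.toContinuousLinearEquiv).map_tsum

section ExpCurve

variable {𝕂 𝔸 : Type*} [RCLike 𝕂] [NormedRing 𝔸] [NormedAlgebra 𝕂 𝔸] [CompleteSpace 𝔸]

theorem hasDerivAt_mul_exp_smul_mul (C A D : 𝔸) (s : 𝕂) :
    HasDerivAt (fun u : 𝕂 => C * NormedSpace.exp (u • A) * D)
      (C * NormedSpace.exp (s • A) * (A * D)) s := by
  simpa only [mul_assoc] using ((hasDerivAt_exp_smul_const A s).const_mul C).mul_const D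

theorem deriv_mul_exp_smul_mul (C A D : 𝔸) :
    deriv (fun u : 𝕂 => C * NormedSpace.exp (u • A) * D) =
      fun s => C * NormedSpace.exp (s • A) * (A * D) :=
  funext fun s => (hasDerivAt_mul_exp_smul_mul C A D s).deriv

theorem iteratedDeriv_mul_exp_smul_mul (C A D : 𝔸) (n : ℕ) :
    iteratedDeriv n (fun u : 𝕂 => C * NormedSpace.exp (u • A) * D) =
      fun s => C * NormedSpace.exp (s • A) * (A ^ n * D) := by
  induction n generalizing D with
  | zero => simp
  | succ n ih => rw [iteratedDeriv_succ', deriv_mul_exp_smul_mul, ih, pow_succ, mul_assoc]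

theorem contDiff_mul_exp_smul_mul (C A D : 𝔸) :
    ContDiff 𝕂 ∞ (fun u : 𝕂 => C * NormedSpace.exp (u • A) * D) := by
  refine contDiff_infty.mpr fun n => ?_
  induction n generalizing D with
  | zero =>
    exact contDiff_zero.mpr <| continuous_iff_continuousAt.mpr fun s =>
      (hasDerivAt_mul_exp_smul_mul C A D s).continuousAt
  | succ n ih =>
    rw [Nat.cast_succ, contDiff_succ_iff_deriv, deriv_mul_exp_smul_mul]
    exact ⟨fun s => (hasDerivAt_mul_exp_smul_mul C A D s).differentiableAt, by simp, ih _⟩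

end ExpCurve

theorem exp_ofReal_mul_I_smul {𝔸 : Type*} [NormedRing 𝔸] [NormedAlgebra ℂ 𝔸] (s : ℝ) (B : 𝔸) :
    NormedSpace.exp (((s : ℂ) * I) • B) = NormedSpace.exp (s • (I • B)) := by
  rw [mul_smul, Complex.coe_smul]

theorem contDiff_exp_ofReal_mul_I_smul_mul {𝔸 : Type*} [NormedRing 𝔸] [NormedAlgebra ℂ 𝔸]
    [CompleteSpace 𝔸] (B T₀ : 𝔸) :
    ContDiff ℝ ∞ fun s : ℝ => NormedSpace.exp (((s : ℂ) * I) • B) * T₀ := by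
  simpa only [exp_ofReal_mul_I_smul, one_mul] using
    contDiff_mul_exp_smul_mul (𝕂 := ℝ) 1 (I • B) T₀

section SkewAdjoint

variable {𝔸 : Type*} [NormedRing 𝔸] [StarRing 𝔸]

theorem CStarRing.norm_one_le [CStarRing 𝔸] : ‖(1 : 𝔸)‖ ≤ 1 := by
  rcases subsingleton_or_nontrivial 𝔸 with h | h
  · simp [Subsingleton.elim (1 : 𝔸) 0]
  · exact CStarRing.norm_one.le

variable [NormedAlgebra ℂ 𝔸] [StarModule ℂ 𝔸]

theorem star_real_smul (s : ℝ) (A : 𝔸) : star (s • A) = s • star A := by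
  rw [← Complex.coe_smul, star_smul, Complex.star_def, Complex.conj_ofReal, Complex.coe_smul]

theorem star_exp_real_smul [ContinuousStar 𝔸] (s : ℝ) (A : 𝔸) :
    star (NormedSpace.exp (s • A)) = NormedSpace.exp (s • star A) := by
  rw [NormedSpace.star_exp, star_real_smul]

theorem IsSelfAdjoint.star_I_smul {B : 𝔸} (hB : IsSelfAdjoint B) : star (I • B) = -(I • B) := by
  rw [star_smul, hB.star_eq, Complex.star_def, Complex.conj_I, neg_smul]

variable [CStarRing 𝔸] [CompleteSpace 𝔸]

theorem exp_real_smul_mem_unitary {A : 𝔸} (hA : star A = -A) (s : ℝ) :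
    NormedSpace.exp (s • A) ∈ unitary 𝔸 := by
  let _ : NormedAlgebra ℚ 𝔸 := NormedAlgebra.restrictScalars ℚ ℂ 𝔸
  refine NormedSpace.exp_mem_unitary_of_mem_skewAdjoint (skewAdjoint.mem_iff.mpr ?_)
  rw [star_real_smul, hA, smul_neg]

theorem norm_iteratedFDeriv_mul_exp_smul_mul_le {A : 𝔸} (hA : star A = -A) (C D : 𝔸) (n : ℕ)
    (s : ℝ) :
    ‖iteratedFDeriv ℝ n (fun u : ℝ => C * NormedSpace.exp (u • A) * D) s‖ ≤
      ‖C‖ * ‖A‖ ^ n * ‖D‖ := by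
  rw [norm_iteratedFDeriv_eq_norm_iteratedDeriv, iteratedDeriv_mul_exp_smul_mul]
  calc ‖C * NormedSpace.exp (s • A) * (A ^ n * D)‖ ≤ ‖C‖ * ‖A ^ n * D‖ := by
        grw [mul_assoc, norm_mul_le,
          CStarRing.norm_mem_unitary_mul _ (exp_real_smul_mem_unitary hA s)]
    _ ≤ ‖C‖ * (‖A‖ ^ n * ‖D‖) := by
        grw [norm_mul_le, norm_pow_le_of_norm_one_le CStarRing.norm_one_le]
    _ = ‖C‖ * ‖A‖ ^ n * ‖D‖ := (mul_assoc _ _ _).symm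

theorem contDiff_star_exp_ofReal_mul_I_smul_mul (B T₀ : 𝔸) :
    ContDiff ℝ ∞ fun s : ℝ => star (NormedSpace.exp (((s : ℂ) * I) • B) * T₀) := by
  simpa only [star_mul, exp_ofReal_mul_I_smul, star_exp_real_smul, mul_one] using
    contDiff_mul_exp_smul_mul (𝕂 := ℝ) (star T₀) (star (I • B)) 1

theorem norm_iteratedFDeriv_exp_ofReal_mul_I_smul_mul_le {B T₀ : 𝔸} (hB : IsSelfAdjoint B)
    (hT₀ : ‖T₀‖ ≤ 1) (n : ℕ) (s : ℝ) :
    ‖iteratedFDeriv ℝ n (fun s : ℝ => NormedSpace.exp (((s : ℂ) * I) • B) * T₀) s‖ ≤ ‖B‖ ^ n := by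
  have h := norm_iteratedFDeriv_mul_exp_smul_mul_le hB.star_I_smul 1 T₀ n s
  simp only [one_mul, ← exp_ofReal_mul_I_smul] at h
  grw [h, CStarRing.norm_one_le, hT₀, norm_smul, Complex.norm_I]
  exact le_of_eq (by ring)

theorem norm_iteratedFDeriv_star_exp_ofReal_mul_I_smul_mul_le {B T₀ : 𝔸} (hB : IsSelfAdjoint B)
    (hT₀ : ‖T₀‖ ≤ 1) (n : ℕ) (s : ℝ) :
    ‖iteratedFDeriv ℝ n (fun s : ℝ => star (NormedSpace.exp (((s : ℂ) * I) • B) * T₀)) s‖ ≤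
      ‖B‖ ^ n := by
  have h := norm_iteratedFDeriv_mul_exp_smul_mul_le (A := star (I • B))
    (by rw [star_star, hB.star_I_smul, neg_neg]) (star T₀) 1 n s
  simp only [mul_one, ← star_exp_real_smul, ← exp_ofReal_mul_I_smul, ← star_mul] at h
  grw [h, CStarRing.norm_one_le, norm_star, hT₀, norm_star, norm_smul, Complex.norm_I]
  exact le_of_eq (by ring)

end SkewAdjoint

section WeightedPowerSeries

variable {𝔸 𝕝 : Type*} [NormedRing 𝔸] [NormedAlgebra ℝ 𝔸]
  [NormedField 𝕝] [NormedSpace 𝕝 𝔸] [SMulCommClass ℝ 𝕝 𝔸]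
  {G : ℝ → 𝔸} {N : ℕ∞} {M : ℝ} {a : ℕ → 𝕝} {e : ℕ → ℕ}

theorem norm_iteratedFDeriv_smul_pow_le (hG : ContDiff ℝ N G) (hM : 0 ≤ M)
    (h1 : ‖(1 : 𝔸)‖ ≤ 1) (hb : ∀ n : ℕ, (n : ℕ∞) ≤ N → ∀ s, ‖iteratedFDeriv ℝ n G s‖ ≤ M ^ n)
    (k n : ℕ) (s : ℝ) (hn : (n : ℕ∞) ≤ N) :
    ‖iteratedFDeriv ℝ n (fun t => a k • G t ^ e k) s‖ ≤ (e k : ℝ) ^ n * ‖a k‖ * M ^ n := by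
  have hGn : ContDiff ℝ n G := hG.of_le (by exact_mod_cast hn)
  rw [iteratedFDeriv_const_smul_apply' (hGn.pow _).contDiffAt, norm_smul]
  calc ‖a k‖ * ‖iteratedFDeriv ℝ n (fun t => G t ^ e k) s‖ ≤ ‖a k‖ * (e k * M) ^ n := by
        gcongr
        exact norm_iteratedFDeriv_pow_le hG hM h1 (by exact_mod_cast hn)
          (fun i hi => hb i (le_trans (by exact_mod_cast hi) hn) s) _
    _ = (e k : ℝ) ^ n * ‖a k‖ * M ^ n := by ring

variable [CompleteSpace 𝔸]

theorem contDiff_tsum_smul_pow_and_iteratedDeriv (hG : ContDiff ℝ N G) (hM : 0 ≤ M)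
    (h1 : ‖(1 : 𝔸)‖ ≤ 1) (hb : ∀ n : ℕ, (n : ℕ∞) ≤ N → ∀ s, ‖iteratedFDeriv ℝ n G s‖ ≤ M ^ n)
    (ha : ∀ n : ℕ, (n : ℕ∞) ≤ N → Summable fun k => (e k : ℝ) ^ n * ‖a k‖) :
    ContDiff ℝ N (fun s => ∑' k, a k • G s ^ e k) ∧
    ∀ l : ℕ, (l : ℕ∞) ≤ N → ∀ s : ℝ,
      Summable (fun k => ‖a k • iteratedDeriv l (fun t => G t ^ e k) s‖) ∧
      iteratedDeriv l (fun s => ∑' k, a k • G s ^ e k) s =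
        ∑' k, a k • iteratedDeriv l (fun t => G t ^ e k) s := by
  have hv (n : ℕ) (hn : (n : ℕ∞) ≤ N) := (ha n hn).mul_right (M ^ n)
  have hbound (n k : ℕ) (s : ℝ) (hn : (n : ℕ∞) ≤ N) :=
    norm_iteratedFDeriv_smul_pow_le (a := a) (e := e) hG hM h1 hb k n s hn
  have hsmooth (k : ℕ) : ContDiff ℝ N fun t => a k • G t ^ e k := (hG.pow _).const_smul _
  refine ⟨contDiff_tsum hsmooth hv hbound, fun l hl s => ⟨?_, ?_⟩⟩
  · refine (hv l hl).of_nonneg_of_le (fun _ => norm_nonneg _) fun k => ?_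
    rw [← iteratedDeriv_fun_const_smul_field, ← norm_iteratedFDeriv_eq_norm_iteratedDeriv]
    exact hbound l k s hl
  · rw [iteratedDeriv_tsum hsmooth hv hbound hl s]
    simp only [iteratedDeriv_fun_const_smul_field]

end WeightedPowerSeries

theorem Summable.abs_pow_mul_of_le {x : ℤ → ℝ} {m n : ℕ}
    (h : Summable fun k : ℤ => (|k| : ℝ) ^ m * x k) (hx : ∀ k, 0 ≤ x k) (hnm : n ≤ m) :
    Summable fun k : ℤ => (|k| : ℝ) ^ n * x k := by
  refine Summable.of_norm_bounded_eventually h ?_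
  filter_upwards [Filter.eventually_cofinite_ne 0] with k hk
  have hk1 : (1 : ℝ) ≤ |(k : ℝ)| := by exact_mod_cast Int.one_le_abs hk
  rw [Real.norm_of_nonneg (mul_nonneg (by positivity) (hx k))]
  exact mul_le_mul_of_nonneg_right (pow_le_pow_right₀ hk1 hnm) (hx k)

theorem Summable.natCast_pow_mul {x : ℤ → ℝ} {n : ℕ}
    (h : Summable fun k : ℤ => (|k| : ℝ) ^ n * x k) :
    Summable fun k : ℕ => (k : ℝ) ^ n * x k :=
  (h.comp_injective Nat.cast_injective).congr fun k => by simp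

theorem Summable.succ_pow_mul_neg {x : ℤ → ℝ} {n : ℕ}
    (h : Summable fun k : ℤ => (|k| : ℝ) ^ n * x k) :
    Summable fun k : ℕ => ((k + 1 : ℕ) : ℝ) ^ n * x (-(k + 1)) :=
  (h.comp_injective (i := fun k : ℕ => -((k : ℤ) + 1)) fun i j hij => by simpa using hij).congr
    fun k => by
      have hk : |((-((k : ℤ) + 1) : ℤ) : ℝ)| = ((k + 1 : ℕ) : ℝ) := by
        push_cast
        rw [abs_neg, abs_of_nonneg (by positivity)]
      simp only [Function.comp_apply, hk]

theorem stmt_15_general (m : ℕ) (f : ℂ → ℂ)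
    (hf_sum : Summable (fun k : ℤ => (|k| : ℝ) ^ m * ‖fourierCoeffT f k‖))
    (H : Type*) [NormedAddCommGroup H] [InnerProductSpace ℂ H] [CompleteSpace H]
    (B T₀ : H →L[ℂ] H) (hB : IsSelfAdjoint B) (hT₀ : ‖T₀‖ ≤ 1)
    (T : ℝ → (H →L[ℂ] H))
    (hT : ∀ s : ℝ, T s = NormedSpace.exp (((s : ℂ) * Complex.I) • B) * T₀)
    (fT : ℝ → (H →L[ℂ] H))
    (hfT : ∀ s : ℝ, fT s = (∑' k : ℕ, fourierCoeffT f k • T s ^ k)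
      + ∑' k : ℕ, fourierCoeffT f (-(k + 1)) • adjoint (T s) ^ (k + 1))
    (l : ℕ) (hlm : l ≤ m) :
    ContDiff ℝ (l : ℕ∞) fT ∧
    ∀ s : ℝ,
      Summable (fun k : ℕ =>
        ‖fourierCoeffT f k • iteratedDeriv l (fun t : ℝ => T t ^ k) s‖) ∧
      Summable (fun k : ℕ =>
        ‖fourierCoeffT f (-(k + 1)) •
          iteratedDeriv l (fun t : ℝ => adjoint (T t) ^ (k + 1)) s‖) ∧
      iteratedDeriv l fT s =
        (∑' k : ℕ, fourierCoeffT f k • iteratedDeriv l (fun t : ℝ => T t ^ k) s)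
          + ∑' k : ℕ, fourierCoeffT f (-(k + 1)) •
              iteratedDeriv l (fun t : ℝ => adjoint (T t) ^ (k + 1)) s := by
  obtain rfl : T = _ := funext hT
  obtain rfl : fT = _ := funext hfT
  simp only [← star_eq_adjoint]
  have hl : (l : ℕ∞) ≤ m := by exact_mod_cast hlm
  have hc (n : ℕ) (hn : (n : ℕ∞) ≤ m) :=
    hf_sum.abs_pow_mul_of_le (fun _ => norm_nonneg _) (by exact_mod_cast hn)
  obtain ⟨h_nat, h_nat'⟩ := contDiff_tsum_smul_pow_and_iteratedDeriv
    ((contDiff_exp_ofReal_mul_I_smul_mul B T₀).of_le (mod_cast le_top)) (norm_nonneg B)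
    CStarRing.norm_one_le (fun n _ => norm_iteratedFDeriv_exp_ofReal_mul_I_smul_mul_le hB hT₀ n)
    fun n hn => (hc n hn).natCast_pow_mul
  obtain ⟨h_neg, h_neg'⟩ := contDiff_tsum_smul_pow_and_iteratedDeriv
    ((contDiff_star_exp_ofReal_mul_I_smul_mul B T₀).of_le (mod_cast le_top)) (norm_nonneg B)
    CStarRing.norm_one_le
    (fun n _ => norm_iteratedFDeriv_star_exp_ofReal_mul_I_smul_mul_le hB hT₀ n)
    fun n hn => (hc n hn).succ_pow_mul_neg
  refine ⟨(h_nat.add h_neg).of_le (mod_cast hl),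
    fun s => ⟨(h_nat' l hl s).1, (h_neg' l hl s).1, ?_⟩⟩
  rw [iteratedDeriv_fun_add (h_nat.of_le (mod_cast hl)).contDiffAt
    (h_neg.of_le (mod_cast hl)).contDiffAt, (h_nat' l hl s).2, (h_neg' l hl s).2]

/-- Term-by-term differentiation of `s ↦ f(T_s)` for `T_s = e^{isB} T₀`, where
`f(T) = Σ_{k≥0} f̂(k) T^k + Σ_{k≥1} f̂(−k) (T*)^k` and `Σ_k |k|^m |f̂(k)| < ∞`. -/
theorem stmt_15 (m : ℕ) (hm : 1 ≤ m) (f : ℂ → ℂ)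
    (hf_int : IntervalIntegrable (fun θ : ℝ => f (Complex.exp (Complex.I * θ))) volume 0
      (2 * Real.pi))
    (hf_sum : Summable (fun k : ℤ => (|k| : ℝ) ^ m * ‖fourierCoeffT f k‖))
    (H : Type*) [NormedAddCommGroup H] [InnerProductSpace ℂ H] [CompleteSpace H]
    (B T₀ : H →L[ℂ] H) (hB : IsSelfAdjoint B) (hT₀ : ‖T₀‖ ≤ 1)
    (T : ℝ → (H →L[ℂ] H))
    (hT : ∀ s : ℝ, T s = NormedSpace.exp (((s : ℂ) * Complex.I) • B) * T₀)
    (fT : ℝ → (H →L[ℂ] H))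
    (hfT : ∀ s : ℝ, fT s = (∑' k : ℕ, fourierCoeffT f k • T s ^ k)
      + ∑' k : ℕ, fourierCoeffT f (-(k + 1)) • adjoint (T s) ^ (k + 1))
    (l : ℕ) (hl : 1 ≤ l) (hlm : l ≤ m) :
    ContDiff ℝ (l : ℕ∞) fT ∧
    ∀ s : ℝ,
      Summable (fun k : ℕ =>
        ‖fourierCoeffT f k • iteratedDeriv l (fun t : ℝ => T t ^ k) s‖) ∧
      Summable (fun k : ℕ =>
        ‖fourierCoeffT f (-(k + 1)) •
          iteratedDeriv l (fun t : ℝ => adjoint (T t) ^ (k + 1)) s‖) ∧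
      iteratedDeriv l fT s =
        (∑' k : ℕ, fourierCoeffT f k • iteratedDeriv l (fun t : ℝ => T t ^ k) s)
          + ∑' k : ℕ, fourierCoeffT f (-(k + 1)) •
              iteratedDeriv l (fun t : ℝ => adjoint (T t) ^ (k + 1)) s :=
  stmt_15_general m f hf_sum H B T₀ hB hT₀ T hT fT hfT l hlm
end
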